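/- For any quasi-Riordan array [g, f] and any formal power series u ∈ K[[t]], the matrix-vector action satisfies [g, f]·u = g·u(0) + (f/t)·(u − u(0)) (first fundamental theorem of quasi-Riordan arrays). -/

import Mathlib

/-!
Split off the column `g`, which only sees `u(0)`. Since `f = t·(f/t) + f(0)` and the constant
`f(0)` never reaches row `n` from the columns `t^(k-1) f` with `k ≤ n`, the remaining columns
may be replaced by `t^k·(f/t)`, `k ≥ 1`; the action of the Riordan-type columns `(t^k·h)ₖ` on `v`
is just multiplication by `h`, applied here to `h = f/t` and `v = u − u(0)`.
-/

open PowerSeries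

/-- `f/t`: the coefficient shift of a power series. -/
noncomputable def pdivX {K : Type*} [Field K] (f : PowerSeries K) : PowerSeries K :=
  PowerSeries.mk fun n => coeff (n + 1) f

/-- The column generating functions `(g, f, tf, t²f, …)` of the quasi-Riordan
array `[g, f]`. -/
noncomputable def qCol {K : Type*} [Field K] (g f : PowerSeries K) : ℕ → PowerSeries K
  | 0 => g
  | k + 1 => X ^ k * f

theorem PowerSeries.sum_range_coeff_X_pow_mul_mul_coeff {R : Type*} [CommSemiring R]
    (h v : PowerSeries R) (n : ℕ) :
    ∑ k ∈ Finset.range (n + 1), coeff n (X ^ k * h) * coeff k v = coeff n (h * v) := by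
  rw [mul_comm h, coeff_mul, Finset.Nat.sum_antidiagonal_eq_sum_range_succ
    (fun i j => coeff i v * coeff j h)]
  refine Finset.sum_congr rfl fun k hk => ?_
  rw [coeff_X_pow_mul', if_pos (Nat.lt_succ_iff.mp (Finset.mem_range.mp hk)), mul_comm]

section pdivX

variable {K : Type*} [Field K]

theorem pdivX_mul_X_add_C (f : PowerSeries K) : pdivX f * X + C (constantCoeff f) = f :=
  (eq_shift_mul_X_add_const f).symm

theorem coeff_X_pow_succ_mul_pdivX {f : PowerSeries K} {k n : ℕ} (hkn : k ≠ n) :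
    coeff n (X ^ (k + 1) * pdivX f) = coeff n (X ^ k * f) := by
  conv_rhs => rw [← pdivX_mul_X_add_C f]
  rw [mul_add, map_add, mul_comm (X ^ k) (C _), coeff_C_mul_X_pow, if_neg (Ne.symm hkn),
    add_zero, pow_succ, mul_assoc, mul_comm X]

theorem coeff_sub_C_constantCoeff_succ (u : PowerSeries K) (k : ℕ) :
    coeff (k + 1) (u - C (constantCoeff u)) = coeff (k + 1) u := by
  rw [map_sub, coeff_C, if_neg k.succ_ne_zero, sub_zero]

end pdivX

theorem FFTQRA {K : Type*} [Field K]
    (g f : PowerSeries K)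
    (u : PowerSeries K) :
    (PowerSeries.mk fun n =>
        ∑ k ∈ Finset.range (n + 1), coeff n (qCol g f k) * coeff k u) =
      g * C (constantCoeff u) + pdivX f * (u - C (constantCoeff u)) := by
  ext n
  rw [coeff_mk, map_add, coeff_mul_C, ← sum_range_coeff_X_pow_mul_mul_coeff,
    Finset.sum_range_succ', Finset.sum_range_succ', add_comm]
  have hv0 : coeff 0 (u - C (constantCoeff u)) = 0 := by simp
  simp only [qCol, pow_zero, one_mul, coeff_zero_eq_constantCoeff_apply, hv0, mul_zero,
    add_zero, coeff_sub_C_constantCoeff_succ]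
  congr 1
  refine Finset.sum_congr rfl fun k hk => ?_
  rw [coeff_X_pow_succ_mul_pdivX (Finset.mem_range.mp hk).ne]
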